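/- arXiv:1705.01117 — 2 statements merged into one kernel-verified Lean document; each statement's English description precedes it below -/
import Mathlib

section
/- Let (C,∂) be a finitely generated free chain complex over R = F₂[U,V,U⁻¹,V⁻¹] with basis B, and write the differential as ∂ = Σ_{n∈ℤ} Pₙ·Uⁿ where each Pₙ is a matrix (in the basis B) with entries in F₂[V,V⁻¹]. Define H_B = Σ_{n∈ℤ} (n(n−1)/2 mod 2)·Pₙ·U^{n−2}. Then (Φ_B)² = ∂ ∘ H_B + H_B ∘ ∂, where Φ_B is the formal derivative of ∂ with respect to U. In particular (Φ_B)² is R-equivariantly chain homotopic to zero. -/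
open Finsupp

noncomputable section

abbrev F2 : Type := ZMod 2

/-- The Laurent polynomial ring `F₂[U,V,U⁻¹,V⁻¹]`, realized as the monoid algebra
of `ℤ × ℤ` over `F₂`; `U` corresponds to `(1,0)` and `V` to `(0,1)`. -/
abbrev R2 : Type := AddMonoidAlgebra F2 (ℤ × ℤ)

/-- Formal derivative of a Laurent polynomial with respect to `U`. -/
def dU (f : R2) : R2 :=
  Finsupp.sum f.coeff fun mn c => AddMonoidAlgebra.single (mn.1 - 1, mn.2) ((mn.1 : F2) * c)

/-- Formal derivative of a Laurent polynomial with respect to `V`. -/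
def dV (f : R2) : R2 :=
  Finsupp.sum f.coeff fun mn c => AddMonoidAlgebra.single (mn.1, mn.2 - 1) ((mn.2 : F2) * c)

/-- The `R2`-linear map `(B →₀ R2) →ₗ (B' →₀ R2)` determined by its values on
the standard basis. -/
def bmap {B B' : Type} (v : B → (B' →₀ R2)) : (B →₀ R2) →ₗ[R2] (B' →₀ R2) :=
  Finsupp.lsum R2 fun x => LinearMap.toSpanSingleton R2 _ (v x)

/-- The matrix entry `P_{x y}` of a linear map with respect to the standard bases. -/
def matOf {B B' : Type} (f : (B →₀ R2) →ₗ[R2] (B' →₀ R2)) (x : B) (y : B') : R2 :=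
  f (Finsupp.single x 1) y

/-- Apply `g : R2 → R2` to each matrix entry of `f`. -/
def entrywise {B B' : Type} [Finite B'] (g : R2 → R2)
    (f : (B →₀ R2) →ₗ[R2] (B' →₀ R2)) : (B →₀ R2) →ₗ[R2] (B' →₀ R2) :=
  bmap fun x => Finsupp.equivFunOnFinite.symm fun y => g (matOf f x y)

/-- `Φ_B`, the formal derivative of the differential with respect to `U`. -/
def PhiB {B : Type} [Finite B] (d : (B →₀ R2) →ₗ[R2] (B →₀ R2)) :
    (B →₀ R2) →ₗ[R2] (B →₀ R2) :=
  entrywise dU d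

/-- `Ψ_B`, the formal derivative of the differential with respect to `V`. -/
def PsiB {B : Type} [Finite B] (d : (B →₀ R2) →ₗ[R2] (B →₀ R2)) :
    (B →₀ R2) →ₗ[R2] (B →₀ R2) :=
  entrywise dV d
/-- The operation on Laurent polynomials sending `Σₙ pₙ(V) Uⁿ` to
`Σₙ (n(n-1)/2 mod 2) pₙ(V) U^(n-2)`, used to define the homotopy `H_B`. -/
def hUU (f : R2) : R2 :=
  Finsupp.sum f.coeff fun mn c =>
    AddMonoidAlgebra.single (mn.1 - 2, mn.2) (((mn.1 * (mn.1 - 1) / 2 : ℤ) : F2) * c)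

/-!
The operator `hUU` is the second Hasse derivative `(∂/∂U)²/2`, and like every Hasse
derivative it satisfies a Leibniz rule, `D²(fg) = D²f·g + Df·Dg + f·D²g`, which comes from
`C(m + p, 2) = C(m, 2) + m p + C(p, 2)`. Applied entrywise to the matrix product `∂ ∘ ∂ = 0`,
this gives `0 = H_B ∘ ∂ + Φ_B ∘ Φ_B + ∂ ∘ H_B`, and in characteristic two that is the claimed
identity.
-/

/-- `Σ c U^m Vⁿ ↦ Σ w(m) c U^(m-k) Vⁿ` -/
def weightedUShift (k : ℤ) (w : ℤ → F2) : R2 →+ R2 :=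
  AddMonoidHom.mk' (fun f => Finsupp.sum f.coeff fun mn c =>
      AddMonoidAlgebra.single (mn.1 - k, mn.2) (w mn.1 * c)) fun f g => by
    rw [AddMonoidAlgebra.coeff_add, Finsupp.sum_add_index] <;>
      simp [mul_add, AddMonoidAlgebra.single_add]

theorem weightedUShift_single (k : ℤ) (w : ℤ → F2) (mn : ℤ × ℤ) (c : F2) :
    weightedUShift k w (AddMonoidAlgebra.single mn c) =
      AddMonoidAlgebra.single (mn.1 - k, mn.2) (w mn.1 * c) := by
  simp [weightedUShift]

theorem dU_eq_weightedUShift : dU = weightedUShift 1 (fun m => (m : F2)) := rfl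

theorem hUU_eq_weightedUShift :
    hUU = weightedUShift 2 (fun m => ((m * (m - 1) / 2 : ℤ) : F2)) := rfl

theorem Int.mul_sub_one_ediv_two_add (m p : ℤ) :
    (m + p) * (m + p - 1) / 2 = m * (m - 1) / 2 + m * p + p * (p - 1) / 2 := by
  have h (n : ℤ) : 2 * (n * (n - 1) / 2) = n * (n - 1) :=
    Int.two_mul_ediv_two_of_even (Int.even_mul_pred_self n)
  apply mul_left_cancel₀ (two_ne_zero (α := ℤ))
  rw [mul_add, mul_add, h, h, h]
  ring

theorem hUU_mul (f g : R2) : hUU (f * g) = hUU f * g + dU f * dU g + f * hUU g := by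
  induction f using AddMonoidAlgebra.induction_linear with
  | zero => simp [hUU_eq_weightedUShift, dU_eq_weightedUShift]
  | add f₁ f₂ h₁ h₂ =>
    simp only [add_mul, hUU_eq_weightedUShift, dU_eq_weightedUShift, map_add] at *
    rw [h₁, h₂]; ring
  | single a c =>
    induction g using AddMonoidAlgebra.induction_linear with
    | zero => simp [hUU_eq_weightedUShift, dU_eq_weightedUShift]
    | add g₁ g₂ h₁ h₂ =>
      simp only [mul_add, hUU_eq_weightedUShift, dU_eq_weightedUShift, map_add] at *
      rw [h₁, h₂]; ring
    | single b e =>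
      simp only [hUU_eq_weightedUShift, dU_eq_weightedUShift, AddMonoidAlgebra.single_mul_single,
        weightedUShift_single]
      have e₂ : (a.1 - 2, a.2) + b = ((a + b).1 - 2, (a + b).2) := by ext <;> simp; ring
      have e₁₁ : (a.1 - 1, a.2) + (b.1 - 1, b.2) = ((a + b).1 - 2, (a + b).2) := by
        ext <;> simp; ring
      have e₀ : a + (b.1 - 2, b.2) = ((a + b).1 - 2, (a + b).2) := by ext <;> simp; ring
      rw [e₂, e₁₁, e₀, ← AddMonoidAlgebra.single_add, ← AddMonoidAlgebra.single_add]
      congr 1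
      rw [Prod.fst_add, Int.mul_sub_one_ediv_two_add]
      push_cast
      ring

section Matrix

variable {B B' B'' : Type}

theorem matOf_add (f g : (B →₀ R2) →ₗ[R2] (B' →₀ R2)) (x : B) (y : B') :
    matOf (f + g) x y = matOf f x y + matOf g x y := rfl

theorem matOf_injective : Function.Injective (matOf (B := B) (B' := B')) := by
  intro f g h
  refine Finsupp.lhom_ext' fun x => LinearMap.ext_ring (Finsupp.ext fun y => ?_)
  exact congrFun (congrFun h x) y

theorem apply_eq_sum_matOf [Fintype B] (f : (B →₀ R2) →ₗ[R2] (B' →₀ R2)) (p : B →₀ R2)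
    (y : B') : f p y = ∑ x, p x * matOf f x y := by
  conv_lhs => rw [← Finsupp.univ_sum_single p]
  rw [map_sum, Finsupp.finsetSum_apply]
  refine Finset.sum_congr rfl fun x _ => ?_
  rw [← Finsupp.smul_single_one, map_smul]
  rfl

theorem matOf_comp [Fintype B'] (f : (B' →₀ R2) →ₗ[R2] (B'' →₀ R2))
    (g : (B →₀ R2) →ₗ[R2] (B' →₀ R2)) (x : B) (z : B'') :
    matOf (f ∘ₗ g) x z = ∑ y, matOf g x y * matOf f y z :=
  apply_eq_sum_matOf f _ z

theorem matOf_entrywise [Finite B'] (φ : R2 → R2) (f : (B →₀ R2) →ₗ[R2] (B' →₀ R2))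
    (x : B) (y : B') : matOf (entrywise φ f) x y = φ (matOf f x y) := by
  simp [matOf, entrywise, bmap]

theorem entrywise_zero [Finite B'] {φ : R2 → R2} (hφ : φ 0 = 0) :
    entrywise φ (0 : (B →₀ R2) →ₗ[R2] (B' →₀ R2)) = 0 :=
  matOf_injective <| funext₂ fun x y => by rw [matOf_entrywise]; exact hφ

theorem entrywise_hUU_comp [Fintype B'] [Finite B''] (f : (B' →₀ R2) →ₗ[R2] (B'' →₀ R2))
    (g : (B →₀ R2) →ₗ[R2] (B' →₀ R2)) :
    entrywise hUU (f ∘ₗ g) =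
      entrywise hUU f ∘ₗ g + entrywise dU f ∘ₗ entrywise dU g + f ∘ₗ entrywise hUU g := by
  refine matOf_injective <| funext₂ fun x z => ?_
  simp only [matOf_entrywise, matOf_add, matOf_comp, hUU_eq_weightedUShift, map_sum]
  simp only [← hUU_eq_weightedUShift, hUU_mul, Finset.sum_add_distrib]
  ring

end Matrix

theorem eq_of_add_eq_zero_of_charTwo {R M : Type*} [Ring R] [CharP R 2] [AddCommGroup M]
    [Module R M] {a b : M} (h : a + b = 0) : a = b := by
  rw [add_eq_zero_iff_eq_neg.mp h, ← neg_one_smul R b, CharTwo.neg_eq, one_smul]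

instance R2.charP : CharP R2 2 :=
  charP_of_injective_algebraMap (FaithfulSMul.algebraMap_injective F2 R2) 2

theorem PhiB_comp_PhiB {B : Type} [Fintype B] (d : (B →₀ R2) →ₗ[R2] (B →₀ R2))
    (hd : d ∘ₗ d = 0) :
    PhiB d ∘ₗ PhiB d = d ∘ₗ entrywise hUU d + entrywise hUU d ∘ₗ d := by
  have h := entrywise_hUU_comp d d
  rw [hd, entrywise_zero (by rw [hUU_eq_weightedUShift, map_zero])] at h
  refine eq_of_add_eq_zero_of_charTwo (R := R2) ?_
  rw [h, PhiB]
  abel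

/-- writing `∂ = Σₙ Pₙ Uⁿ` and setting
`H_B = Σₙ (n(n-1)/2 mod 2) Pₙ U^(n-2)` (the entrywise operation `hUU` applied
to the matrix of `∂`), one has `(Φ_B)² = ∂ ∘ H_B + H_B ∘ ∂`; in particular
`(Φ_B)²` is `R`-equivariantly chain homotopic to zero. -/
theorem stmt3 {B : Type} [Fintype B]
    (d : (B →₀ R2) →ₗ[R2] (B →₀ R2)) (hd : d ∘ₗ d = 0) :
    PhiB d ∘ₗ PhiB d = d ∘ₗ entrywise hUU d + entrywise hUU d ∘ₗ d ∧
    ∃ H : (B →₀ R2) →ₗ[R2] (B →₀ R2),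
      PhiB d ∘ₗ PhiB d = d ∘ₗ H + H ∘ₗ d :=
  ⟨PhiB_comp_PhiB d hd, entrywise hUU d, PhiB_comp_PhiB d hd⟩

end
end

section
/- Let C₁, C₁', C₂ be chain complexes over F₂ with chain maps ι₁, Φ₁, Ψ₁ on C₁; ι₁', Φ₁', Ψ₁' on C₁'; and ι₂, Φ₂, Ψ₂ on C₂. Suppose F : C₁ → C₁' is a chain map with F∘ι₁ ≃ ι₁'∘F, F∘Φ₁ ≃ Φ₁'∘F, and that the needed commutation relations hold up to homotopy. Then F⊗id : C₁⊗C₂ → C₁'⊗C₂ intertwines the product involutions up to chain homotopy: (F⊗id)∘(ι₁⊗ι₂ + Φ₁ι₁⊗Ψ₂ι₂) ≃ (ι₁'⊗ι₂ + Φ₁'ι₁'⊗Ψ₂ι₂)∘(F⊗id). -/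
open TensorProduct

noncomputable section

/-- Chain homotopy (over `F₂`) for maps between two chain complexes:
`f ≃ g` iff `f + g = d₂ ∘ H + H ∘ d₁` for some `F₂`-linear `H`. -/
def Htp2 {C C' : Type} [AddCommGroup C] [Module F2 C]
    [AddCommGroup C'] [Module F2 C']
    (d : C →ₗ[F2] C) (d' : C' →ₗ[F2] C') (f g : C →ₗ[F2] C') : Prop :=
  ∃ H : C →ₗ[F2] C', f + g = d' ∘ₗ H + H ∘ₗ d

/-- Chain homotopy of endomorphisms of a single complex. -/
def Htp {C : Type} [AddCommGroup C] [Module F2 C]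
    (d f g : C →ₗ[F2] C) : Prop :=
  Htp2 d d f g

/-- `f ⊗ id + id ⊗ g` on the tensor product of two complexes over `F₂`; applied
to the differentials it is the tensor-product differential. -/
def tD {C₁ C₂ : Type} [AddCommGroup C₁] [Module F2 C₁]
    [AddCommGroup C₂] [Module F2 C₂]
    (f : C₁ →ₗ[F2] C₁) (g : C₂ →ₗ[F2] C₂) :
    C₁ ⊗[F2] C₂ →ₗ[F2] C₁ ⊗[F2] C₂ :=
  TensorProduct.map f LinearMap.id + TensorProduct.map LinearMap.id g

/-! Over `F₂`, chain homotopy is transitive and compatible with sums, with composition by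
chain maps and with tensoring by a chain map. Tensoring `Fι₁ ≃ ι₁'F` with `ι₂`, and
`FΦ₁ι₁ ≃ Φ₁'Fι₁ ≃ Φ₁'ι₁'F` with `Ψ₂ι₂`, and adding gives the claim. -/

namespace Htp2

variable {C C' C'' : Type} [AddCommGroup C] [Module F2 C] [AddCommGroup C'] [Module F2 C']
  [AddCommGroup C''] [Module F2 C''] {d : C →ₗ[F2] C} {d' : C' →ₗ[F2] C'} {d'' : C'' →ₗ[F2] C''}

theorem add {f g f' g' : C →ₗ[F2] C'} (h : Htp2 d d' f g) (h' : Htp2 d d' f' g') :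
    Htp2 d d' (f + f') (g + g') := by
  obtain ⟨H, hH⟩ := h
  obtain ⟨H', hH'⟩ := h'
  refine ⟨H + H', ?_⟩
  rw [add_add_add_comm, hH, hH', LinearMap.comp_add, LinearMap.add_comp]
  abel

theorem trans {f g k : C →ₗ[F2] C'} (h : Htp2 d d' f g) (h' : Htp2 d d' g k) :
    Htp2 d d' f k := by
  obtain ⟨H, hH⟩ := h
  obtain ⟨H', hH'⟩ := h'
  refine ⟨H + H', ?_⟩
  rw [← ZModModule.add_add_add_cancel f g k, hH, hH', LinearMap.comp_add, LinearMap.add_comp]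
  abel

theorem comp_left {f g : C →ₗ[F2] C'} (h : Htp2 d d' f g) {P : C' →ₗ[F2] C''}
    (hP : d'' ∘ₗ P = P ∘ₗ d') : Htp2 d d'' (P ∘ₗ f) (P ∘ₗ g) := by
  obtain ⟨H, hH⟩ := h
  refine ⟨P ∘ₗ H, ?_⟩
  rw [← LinearMap.comp_add, hH, LinearMap.comp_add, ← LinearMap.comp_assoc H d' P, ← hP]
  rfl

theorem comp_right {f g : C' →ₗ[F2] C''} (h : Htp2 d' d'' f g) {Q : C →ₗ[F2] C'}
    (hQ : d' ∘ₗ Q = Q ∘ₗ d) : Htp2 d d'' (f ∘ₗ Q) (g ∘ₗ Q) := by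
  obtain ⟨H, hH⟩ := h
  refine ⟨H ∘ₗ Q, ?_⟩
  rw [← LinearMap.add_comp, hH, LinearMap.add_comp, LinearMap.comp_assoc Q d' H, hQ]
  rfl

/-- The homotopy is `H ⊗ φ`: its cross terms `H ⊗ (d φ + φ d)` vanish since `φ` is a chain map. -/
theorem map_tensor {D D' : Type} [AddCommGroup D] [Module F2 D] [AddCommGroup D'] [Module F2 D']
    {d₁ : D →ₗ[F2] D} {d₁' : D' →ₗ[F2] D'} {f g : D →ₗ[F2] D'} (h : Htp2 d₁ d₁' f g)
    {φ : C →ₗ[F2] C} (hφ : d ∘ₗ φ = φ ∘ₗ d) :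
    Htp2 (tD d₁ d) (tD d₁' d) (map f φ) (map g φ) := by
  obtain ⟨H, hH⟩ := h
  refine ⟨map H φ, ?_⟩
  simp only [tD, LinearMap.add_comp, LinearMap.comp_add, ← map_comp, LinearMap.comp_id,
    LinearMap.id_comp, ← map_add_left, hH, hφ]
  rw [map_add_left, add_add_add_comm, ZModModule.add_self, add_zero]

end Htp2

theorem stmt17_general {C₁ C₁' C₂ : Type} [AddCommGroup C₁] [Module F2 C₁]
    [AddCommGroup C₁'] [Module F2 C₁'] [AddCommGroup C₂] [Module F2 C₂]
    (d₁ ι₁ Φ₁ : C₁ →ₗ[F2] C₁) (d₁' ι₁' Φ₁' : C₁' →ₗ[F2] C₁')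
    (d₂ ι₂ Ψ₂ : C₂ →ₗ[F2] C₂)
    (hι₁ : d₁ ∘ₗ ι₁ = ι₁ ∘ₗ d₁)
    (hΦ₁' : d₁' ∘ₗ Φ₁' = Φ₁' ∘ₗ d₁')
    (hι₂ : d₂ ∘ₗ ι₂ = ι₂ ∘ₗ d₂) (hΨ₂ : d₂ ∘ₗ Ψ₂ = Ψ₂ ∘ₗ d₂)
    (F : C₁ →ₗ[F2] C₁')
    (hFι : Htp2 d₁ d₁' (F ∘ₗ ι₁) (ι₁' ∘ₗ F))
    (hFΦ : Htp2 d₁ d₁' (F ∘ₗ Φ₁) (Φ₁' ∘ₗ F)) :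
    Htp2 (tD d₁ d₂) (tD d₁' d₂)
      (TensorProduct.map F LinearMap.id ∘ₗ
        (TensorProduct.map ι₁ ι₂ + TensorProduct.map (Φ₁ ∘ₗ ι₁) (Ψ₂ ∘ₗ ι₂)))
      ((TensorProduct.map ι₁' ι₂ + TensorProduct.map (Φ₁' ∘ₗ ι₁') (Ψ₂ ∘ₗ ι₂)) ∘ₗ
        TensorProduct.map F LinearMap.id) := by
  have hFΦι : Htp2 d₁ d₁' (F ∘ₗ Φ₁ ∘ₗ ι₁) (Φ₁' ∘ₗ ι₁' ∘ₗ F) :=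
    (hFΦ.comp_right hι₁).trans (hFι.comp_left hΦ₁')
  have hΨι₂ : d₂ ∘ₗ Ψ₂ ∘ₗ ι₂ = (Ψ₂ ∘ₗ ι₂) ∘ₗ d₂ := by
    rw [← LinearMap.comp_assoc, hΨ₂, LinearMap.comp_assoc, hι₂, LinearMap.comp_assoc]
  have := (hFι.map_tensor hι₂).add (hFΦι.map_tensor hΨι₂)
  simpa only [LinearMap.comp_add, LinearMap.add_comp, ← map_comp, LinearMap.comp_id,
    LinearMap.id_comp, LinearMap.comp_assoc] using this

/-- if `F : C₁ → C₁'` is a chain map with `F∘ι₁ ≃ ι₁'∘F` and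
`F∘Φ₁ ≃ Φ₁'∘F` (all maps being chain maps), then `F⊗id` intertwines the
product involutions up to chain homotopy:
`(F⊗id)∘(ι₁⊗ι₂ + Φ₁ι₁⊗Ψ₂ι₂) ≃ (ι₁'⊗ι₂ + Φ₁'ι₁'⊗Ψ₂ι₂)∘(F⊗id)`. -/
theorem stmt17 {C₁ C₁' C₂ : Type} [AddCommGroup C₁] [Module F2 C₁]
    [AddCommGroup C₁'] [Module F2 C₁'] [AddCommGroup C₂] [Module F2 C₂]
    (d₁ ι₁ Φ₁ Ψ₁ : C₁ →ₗ[F2] C₁) (d₁' ι₁' Φ₁' Ψ₁' : C₁' →ₗ[F2] C₁')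
    (d₂ ι₂ Φ₂ Ψ₂ : C₂ →ₗ[F2] C₂)
    (hd₁ : d₁ ∘ₗ d₁ = 0) (hd₁' : d₁' ∘ₗ d₁' = 0) (hd₂ : d₂ ∘ₗ d₂ = 0)
    (hι₁ : d₁ ∘ₗ ι₁ = ι₁ ∘ₗ d₁) (hΦ₁ : d₁ ∘ₗ Φ₁ = Φ₁ ∘ₗ d₁) (hΨ₁ : d₁ ∘ₗ Ψ₁ = Ψ₁ ∘ₗ d₁)
    (hι₁' : d₁' ∘ₗ ι₁' = ι₁' ∘ₗ d₁') (hΦ₁' : d₁' ∘ₗ Φ₁' = Φ₁' ∘ₗ d₁')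
    (hΨ₁' : d₁' ∘ₗ Ψ₁' = Ψ₁' ∘ₗ d₁')
    (hι₂ : d₂ ∘ₗ ι₂ = ι₂ ∘ₗ d₂) (hΦ₂ : d₂ ∘ₗ Φ₂ = Φ₂ ∘ₗ d₂) (hΨ₂ : d₂ ∘ₗ Ψ₂ = Ψ₂ ∘ₗ d₂)
    (F : C₁ →ₗ[F2] C₁') (hF : d₁' ∘ₗ F = F ∘ₗ d₁)
    (hFι : Htp2 d₁ d₁' (F ∘ₗ ι₁) (ι₁' ∘ₗ F))
    (hFΦ : Htp2 d₁ d₁' (F ∘ₗ Φ₁) (Φ₁' ∘ₗ F)) :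
    Htp2 (tD d₁ d₂) (tD d₁' d₂)
      (TensorProduct.map F LinearMap.id ∘ₗ
        (TensorProduct.map ι₁ ι₂ + TensorProduct.map (Φ₁ ∘ₗ ι₁) (Ψ₂ ∘ₗ ι₂)))
      ((TensorProduct.map ι₁' ι₂ + TensorProduct.map (Φ₁' ∘ₗ ι₁') (Ψ₂ ∘ₗ ι₂)) ∘ₗ
        TensorProduct.map F LinearMap.id) :=
  stmt17_general d₁ ι₁ Φ₁ d₁' ι₁' Φ₁' d₂ ι₂ Ψ₂ hι₁ hΦ₁' hι₂ hΨ₂ F hFι hFΦ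

end
end
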